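/- arXiv:2505.11761 — 2 statements merged into one kernel-verified Lean document; each statement's English description precedes it below -/
import Mathlib

section
/- In the abstract quadratic setting, every sequence (z_n) in X such that ‖Q′(z_n)‖ → 0 (in the dual/operator norm, Q′ denoting the Fréchet derivative) converges to 0 in X. In particular, Q satisfies the Palais–Smale condition: every sequence (z_n) ⊂ X with (Q(z_n)) bounded and ‖Q′(z_n)‖ → 0 possesses a convergent subsequence. -/
open scoped RealInnerProductSpace

/-- In the abstract quadratic setting, every sequence `(z_n)` with
`‖Q′(z_n)‖ → 0` converges to `0`; in particular `Q` satisfies the Palais–Smale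
condition. -/
theorem stmt_4 {X : Type*} [NormedAddCommGroup X] [InnerProductSpace ℝ X] [CompleteSpace X]
    (Xm : Submodule ℝ X) (hXm : IsClosed (Xm : Set X))
    (b : X →L[ℝ] X →L[ℝ] ℝ)
    (hsymm : ∀ z w : X, b z w = b w z)
    (horth : ∀ z₁ ∈ Xm, ∀ z₂ ∈ Xmᗮ, b z₁ z₂ = 0)
    (α β : ℝ) (hα : 1 < α) (hβ : β < 1)
    (hbm : ∀ z₁ ∈ Xm, α * ‖z₁‖ ^ 2 ≤ b z₁ z₁)
    (hbp : ∀ z₂ ∈ Xmᗮ, b z₂ z₂ ≤ β * ‖z₂‖ ^ 2)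
    (Q : X → ℝ) (hQ : ∀ z, Q z = 1 / 2 * ‖z‖ ^ 2 - 1 / 2 * b z z)
    (D : X → X →L[ℝ] ℝ)
    (hD : ∀ z, HasFDerivAt Q (D z) z)
    (hDval : ∀ z Φ : X, D z Φ = ⟪z, Φ⟫ - b z Φ) :
    (∀ z : ℕ → X,
        Filter.Tendsto (fun n => ‖D (z n)‖) Filter.atTop (nhds 0) →
        Filter.Tendsto z Filter.atTop (nhds (0 : X))) ∧
    (∀ z : ℕ → X,
        (∃ C : ℝ, ∀ n, |Q (z n)| ≤ C) →
        Filter.Tendsto (fun n => ‖D (z n)‖) Filter.atTop (nhds 0) →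
        ∃ (w : X) (φ : ℕ → ℕ), StrictMono φ ∧
          Filter.Tendsto (z ∘ φ) Filter.atTop (nhds w)) := by
  haveI : CompleteSpace Xm := hXm.completeSpace_coe
  set c : ℝ := min (α - 1) (1 - β) with hc
  have hcpos : 0 < c := lt_min (by linarith) (by linarith)
  -- key estimate : c * ‖z‖ ≤ ‖D z‖ for all z
  have key : ∀ z : X, c * ‖z‖ ≤ ‖D z‖ := by
    intro z
    obtain ⟨z₁, hz₁, z₂, hz₂, hzeq⟩ := Xm.exists_add_mem_mem_orthogonal z
    have hip : ⟪z₁, z₂⟫ = 0 := (Submodule.mem_orthogonal Xm z₂).mp hz₂ z₁ hz₁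
    have hip' : ⟪z₂, z₁⟫ = 0 := by rwa [real_inner_comm]
    have hb12 : b z₁ z₂ = 0 := horth z₁ hz₁ z₂ hz₂
    have hb21 : b z₂ z₁ = 0 := by rw [hsymm]; exact hb12
    have hnormsq : ‖z‖ ^ 2 = ‖z₁‖ ^ 2 + ‖z₂‖ ^ 2 := by
      rw [hzeq, norm_add_sq_real, hip]; ring
    have hnormsub : ‖z₂ - z₁‖ = ‖z‖ := by
      have h1 : ‖z₂ - z₁‖ ^ 2 = ‖z‖ ^ 2 := by
        rw [norm_sub_sq_real, hip', hnormsq]; ring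
      rw [← Real.sqrt_sq (norm_nonneg (z₂ - z₁)), ← Real.sqrt_sq (norm_nonneg z), h1]
    -- compute D z (z₂ - z₁)
    have hval : D z (z₂ - z₁) = (‖z₂‖ ^ 2 - b z₂ z₂) + (b z₁ z₁ - ‖z₁‖ ^ 2) := by
      rw [hDval]
      have hinner : ⟪z, z₂ - z₁⟫ = ‖z₂‖ ^ 2 - ‖z₁‖ ^ 2 := by
        rw [hzeq, inner_sub_right, inner_add_left, inner_add_left, hip, hip',
          real_inner_self_eq_norm_sq, real_inner_self_eq_norm_sq]
        ring
      have hbval : b z (z₂ - z₁) = b z₂ z₂ - b z₁ z₁ := by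
        rw [hzeq, map_add]
        simp only [ContinuousLinearMap.add_apply, map_sub, hb12, hb21]
        ring
      rw [hinner, hbval]; ring
    have hlow : c * ‖z‖ ^ 2 ≤ D z (z₂ - z₁) := by
      have h1 := hbm z₁ hz₁
      have h2 := hbp z₂ hz₂
      have hc1 : c ≤ α - 1 := min_le_left _ _
      have hc2 : c ≤ 1 - β := min_le_right _ _
      have := sq_nonneg ‖z₁‖
      have := sq_nonneg ‖z₂‖
      rw [hval, hnormsq]; nlinarith
    have hup : D z (z₂ - z₁) ≤ ‖D z‖ * ‖z‖ := by
      calc D z (z₂ - z₁) ≤ ‖D z (z₂ - z₁)‖ := le_abs_self _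
        _ ≤ ‖D z‖ * ‖z₂ - z₁‖ := (D z).le_opNorm _
        _ = ‖D z‖ * ‖z‖ := by rw [hnormsub]
    rcases eq_or_ne z 0 with rfl | hz0
    · simpa using norm_nonneg (D (0 : X))
    · have hznorm : 0 < ‖z‖ := norm_pos_iff.mpr hz0
      have : c * ‖z‖ * ‖z‖ ≤ ‖D z‖ * ‖z‖ := by nlinarith
      exact le_of_mul_le_mul_right this hznorm
  have main : ∀ z : ℕ → X,
      Filter.Tendsto (fun n => ‖D (z n)‖) Filter.atTop (nhds 0) →
      Filter.Tendsto z Filter.atTop (nhds (0 : X)) := by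
    intro z hz
    rw [tendsto_zero_iff_norm_tendsto_zero]
    apply squeeze_zero (fun n => norm_nonneg _) (fun n => ?_)
      (g := fun n => ‖D (z n)‖ / c)
    · have := hz.div_const c
      simpa using this
    · rw [le_div_iff₀ hcpos, mul_comm]
      exact key (z n)
  refine ⟨main, fun z _ hz => ⟨0, id, strictMono_id, ?_⟩⟩
  exact main z hz
end

section
/- In the abstract quadratic setting, let Φ : X → ℝ be C¹ and suppose there exist C > 0 and p > 2 such that |⟨Φ′(z), z₂ − z₁⟩| ≤ C‖z‖^p for every z = z₁ + z₂ ∈ X with z₁ ∈ X⁻, z₂ ∈ X⁺. Set ν = min{α − 1, 1 − β}, ρ = (ν/(2C))^{1/(p−2)}, and for t ∈ [0,1] define J_t = Q − tΦ. Then for every t ∈ [0,1] and every z ∈ X with ‖z‖ ≤ ρ one has ⟨J_t′(z), z₂ − z₁⟩ ≥ (ν/2)‖z‖²; consequently, for every t ∈ [0,1], the origin is the only critical point of J_t in the closed ball {z ∈ X : ‖z‖ ≤ ρ}. -/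
/-!
Testing `J_t′(z)` against `z₂ − z₁` makes the quadratic part coercive: by orthogonality it equals
`(‖z₂‖² − b(z₂,z₂)) + (b(z₁,z₁) − ‖z₁‖²) ≥ ν‖z‖²`. The perturbation `tΦ` contributes at most
`C‖z‖^p = C‖z‖^(p−2)‖z‖²`, and `ρ` is exactly the radius on which `C‖z‖^(p−2) ≤ ν/2`.
A critical point in the ball therefore has `(ν/2)‖z‖² ≤ 0`.
-/

open scoped RealInnerProductSpace

section Quadratic

variable {X : Type*} [NormedAddCommGroup X] [InnerProductSpace ℝ X] {b : X →L[ℝ] X →L[ℝ] ℝ}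

theorem hasFDerivAt_half_norm_sq_sub_half_diag (hsymm : ∀ z w : X, b z w = b w z) (z : X) :
    HasFDerivAt (fun w => 1 / 2 * ‖w‖ ^ 2 - 1 / 2 * b w w) (innerSL ℝ z - b z) z := by
  have hnorm := (hasFDerivAt_id z).norm_sq
  have hdiag := b.hasFDerivAt_of_bilinear (hasFDerivAt_id z) (hasFDerivAt_id z)
  refine ((hnorm.const_mul (1 / 2 : ℝ)).sub (hdiag.const_mul (1 / 2 : ℝ))).congr_fderiv ?_
  ext v
  simp [hsymm v z]
  ring

theorem fderiv_sub_mul_apply {Q Φ : X → ℝ} (hsymm : ∀ z w : X, b z w = b w z)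
    (hQ : ∀ z, Q z = 1 / 2 * ‖z‖ ^ 2 - 1 / 2 * b z z) {z : X} (hΦ : DifferentiableAt ℝ Φ z)
    (t : ℝ) (v : X) :
    fderiv ℝ (fun w => Q w - t * Φ w) z v = ⟪z, v⟫ - b z v - t * fderiv ℝ Φ z v := by
  have hQ' : HasFDerivAt Q (innerSL ℝ z - b z) z :=
    funext hQ ▸ hasFDerivAt_half_norm_sq_sub_half_diag hsymm z
  have hJ : HasFDerivAt (fun w => Q w - t * Φ w) (innerSL ℝ z - b z - t • fderiv ℝ Φ z) z :=
    hQ'.sub (hΦ.hasFDerivAt.const_mul t)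
  rw [hJ.fderiv]
  simp

theorem min_mul_norm_add_sq_le {K : Submodule ℝ X} (hsymm : ∀ z w : X, b z w = b w z)
    (horth : ∀ z₁ ∈ K, ∀ z₂ ∈ Kᗮ, b z₁ z₂ = 0) {α β : ℝ}
    (hbm : ∀ z₁ ∈ K, α * ‖z₁‖ ^ 2 ≤ b z₁ z₁) (hbp : ∀ z₂ ∈ Kᗮ, b z₂ z₂ ≤ β * ‖z₂‖ ^ 2)
    {z₁ z₂ : X} (h₁ : z₁ ∈ K) (h₂ : z₂ ∈ Kᗮ) :
    min (α - 1) (1 - β) * ‖z₁ + z₂‖ ^ 2 ≤ ⟪z₁ + z₂, z₂ - z₁⟫ - b (z₁ + z₂) (z₂ - z₁) := by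
  have hinner : ⟪z₁, z₂⟫ = 0 := Submodule.inner_right_of_mem_orthogonal h₁ h₂
  have hb₁₂ : b z₁ z₂ = 0 := horth z₁ h₁ z₂ h₂
  have hb₂₁ : b z₂ z₁ = 0 := hsymm z₂ z₁ ▸ hb₁₂
  have hpyth : ‖z₁ + z₂‖ ^ 2 = ‖z₁‖ ^ 2 + ‖z₂‖ ^ 2 := by
    rw [norm_add_sq_real, hinner]; ring
  have hsplit : ⟪z₁ + z₂, z₂ - z₁⟫ - b (z₁ + z₂) (z₂ - z₁)
      = (‖z₂‖ ^ 2 - b z₂ z₂) + (b z₁ z₁ - ‖z₁‖ ^ 2) := by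
    simp only [inner_add_left, inner_sub_right, real_inner_comm z₂ z₁,
      real_inner_self_eq_norm_sq, map_add, map_sub, add_apply, hb₁₂, hb₂₁]
    ring
  rw [hpyth, hsplit]
  nlinarith [hbm z₁ h₁, hbp z₂ h₂, min_le_left (α - 1) (1 - β), min_le_right (α - 1) (1 - β),
    sq_nonneg ‖z₁‖, sq_nonneg ‖z₂‖]

end Quadratic

theorem mul_rpow_le_half_mul_sq {C p ν r : ℝ} (hC : 0 < C) (hp : 2 < p) (hν : 0 ≤ ν)
    (hr : 0 ≤ r) (hρ : r ≤ (ν / (2 * C)) ^ (1 / (p - 2))) :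
    C * r ^ p ≤ ν / 2 * r ^ 2 := by
  have hsmall : r ^ (p - 2) ≤ ν / (2 * C) := by
    rwa [one_div, Real.le_rpow_inv_iff_of_pos hr (by positivity) (by linarith)] at hρ
  calc C * r ^ p = C * (r ^ (p - 2) * r ^ 2) := by
        rw [← Real.rpow_two, ← Real.rpow_add' hr (by linarith), sub_add_cancel]
    _ ≤ C * (ν / (2 * C) * r ^ 2) := by gcongr
    _ = ν / 2 * r ^ 2 := by field_simp

/-- In the abstract quadratic setting, if `Φ` is `C¹` with
`|⟨Φ′(z), z₂ − z₁⟩| ≤ C‖z‖^p` (`C > 0`, `p > 2`), then with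
`ν = min{α−1, 1−β}` and `ρ = (ν/(2C))^(1/(p−2))`, for every `t ∈ [0,1]` and every
`z = z₁ + z₂` with `‖z‖ ≤ ρ` one has `⟨J_t′(z), z₂ − z₁⟩ ≥ (ν/2)‖z‖²`, where
`J_t = Q − tΦ`; consequently the origin is the only critical point of `J_t`
in the closed ball of radius `ρ`. -/
theorem stmt_8 {X : Type*} [NormedAddCommGroup X] [InnerProductSpace ℝ X] [CompleteSpace X]
    (Xm : Submodule ℝ X) (hXm : IsClosed (Xm : Set X))
    (b : X →L[ℝ] X →L[ℝ] ℝ)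
    (hsymm : ∀ z w : X, b z w = b w z)
    (horth : ∀ z₁ ∈ Xm, ∀ z₂ ∈ Xmᗮ, b z₁ z₂ = 0)
    (α β : ℝ) (hα : 1 < α) (hβ : β < 1)
    (hbm : ∀ z₁ ∈ Xm, α * ‖z₁‖ ^ 2 ≤ b z₁ z₁)
    (hbp : ∀ z₂ ∈ Xmᗮ, b z₂ z₂ ≤ β * ‖z₂‖ ^ 2)
    (Q : X → ℝ) (hQ : ∀ z, Q z = 1 / 2 * ‖z‖ ^ 2 - 1 / 2 * b z z)
    (Φ : X → ℝ) (hΦ : ContDiff ℝ 1 Φ)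
    (C p : ℝ) (hC : 0 < C) (hp : 2 < p)
    (hbound : ∀ z₁ ∈ Xm, ∀ z₂ ∈ Xmᗮ,
      |fderiv ℝ Φ (z₁ + z₂) (z₂ - z₁)| ≤ C * ‖z₁ + z₂‖ ^ p)
    (ν ρ : ℝ) (hν : ν = min (α - 1) (1 - β))
    (hρ : ρ = (ν / (2 * C)) ^ (1 / (p - 2))) :
    (∀ t ∈ Set.Icc (0 : ℝ) 1, ∀ z₁ ∈ Xm, ∀ z₂ ∈ Xmᗮ, ‖z₁ + z₂‖ ≤ ρ →
        ν / 2 * ‖z₁ + z₂‖ ^ 2 ≤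
          fderiv ℝ (fun w => Q w - t * Φ w) (z₁ + z₂) (z₂ - z₁)) ∧
    (∀ t ∈ Set.Icc (0 : ℝ) 1, ∀ z : X, ‖z‖ ≤ ρ →
        fderiv ℝ (fun w => Q w - t * Φ w) z = 0 → z = 0) := by
  have hν₀ : 0 < ν := hν ▸ lt_min (by linarith) (by linarith)
  have hcoercive : ∀ t ∈ Set.Icc (0 : ℝ) 1, ∀ z₁ ∈ Xm, ∀ z₂ ∈ Xmᗮ, ‖z₁ + z₂‖ ≤ ρ →
      ν / 2 * ‖z₁ + z₂‖ ^ 2 ≤ fderiv ℝ (fun w => Q w - t * Φ w) (z₁ + z₂) (z₂ - z₁) := by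
    rintro t ⟨ht₀, ht₁⟩ z₁ h₁ z₂ h₂ hz
    rw [fderiv_sub_mul_apply hsymm hQ (hΦ.differentiable one_ne_zero _)]
    have hquad := hν ▸ min_mul_norm_add_sq_le hsymm horth hbm hbp h₁ h₂
    have hpert : |fderiv ℝ Φ (z₁ + z₂) (z₂ - z₁)| ≤ ν / 2 * ‖z₁ + z₂‖ ^ 2 :=
      (hbound z₁ h₁ z₂ h₂).trans
        (mul_rpow_le_half_mul_sq hC hp hν₀.le (norm_nonneg _) (hρ ▸ hz))
    have htΦ : t * fderiv ℝ Φ (z₁ + z₂) (z₂ - z₁) ≤ |fderiv ℝ Φ (z₁ + z₂) (z₂ - z₁)| :=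
      (mul_le_mul_of_nonneg_left (le_abs_self _) ht₀).trans
        (mul_le_of_le_one_left (abs_nonneg _) ht₁)
    linarith
  refine ⟨hcoercive, fun t ht z hz hcrit => ?_⟩
  have := hXm.completeSpace_coe
  obtain ⟨z₁, h₁, z₂, h₂, rfl⟩ := Xm.exists_add_mem_mem_orthogonal z
  have hnonpos := hcoercive t ht z₁ h₁ z₂ h₂ hz
  rw [hcrit, zero_apply] at hnonpos
  have hsq : ‖z₁ + z₂‖ ^ 2 ≤ 0 := nonpos_of_mul_nonpos_right hnonpos (half_pos hν₀)
  exact norm_eq_zero.1 (pow_eq_zero_iff two_ne_zero |>.1 (hsq.antisymm (sq_nonneg _)))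
end
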